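/- arXiv:1409.7510 — 3 statements merged into one kernel-verified Lean document; each statement's English description precedes it below -/
import Mathlib

section
/- If z = xw = wy for words x, y, w, z over an alphabet, then there exist unique words u, v and a unique integer i ≥ 0 such that x = uv, w = (uv)^i u, and y = vu. -/
/-! If `|w| < |x|`, then `w` is a prefix of `x = w v` and `y = v w`. Otherwise `w = x w'` with
`x w' = w' y`, and we recurse on the shorter `w'`. Uniqueness: `|w| = i |x| + |u|` with
`|u| < |x|` is Euclidean division, which fixes `i` and `u`, and then `v`. -/

/-- `k`-fold concatenation of a word with itself. -/
def listPow {A : Type*} (l : List A) : ℕ → List A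
  | 0 => []
  | n + 1 => l ++ listPow l n

/-- Application of a morphism (given by its images of letters) to a word. -/
def wordMap {A : Type*} (φ : A → List A) (x : List A) : List A :=
  x.flatMap φ

/-- `k`-th power (iterate) of a morphism. -/
def morPow {A : Type*} (φ : A → List A) : ℕ → A → List A
  | 0 => fun a => [a]
  | k + 1 => fun a => wordMap (morPow φ k) (φ a)

/-- `φ` is a right conjugate of `ψ` (notation `ψ ▷ φ`):
there is a word `w` with `w ψ(x) = φ(x) w` for all `x`. -/
def IsRightConjOf {A : Type*} (φ ψ : A → List A) : Prop :=
  ∃ w : List A, ∀ a : A, w ++ ψ a = φ a ++ w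

/-- `φ` and `ψ` are conjugate morphisms. -/
def AreConjugates {A : Type*} (φ ψ : A → List A) : Prop :=
  IsRightConjOf φ ψ ∨ IsRightConjOf ψ φ

/-- `φL` is the leftmost conjugate of `φ`. -/
def IsLeftmostConjOf {A : Type*} (φL φ : A → List A) : Prop :=
  IsRightConjOf φ φL ∧ ∀ ψ : A → List A, IsRightConjOf φL ψ → ψ = φL

/-- `φR` is the rightmost conjugate of `φ`. -/
def IsRightmostConjOf {A : Type*} (φR φ : A → List A) : Prop :=
  IsRightConjOf φR φ ∧ ∀ ψ : A → List A, IsRightConjOf ψ φR → ψ = φR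

/-- A morphism is cyclic if all images of letters are powers of a common word. -/
def CyclicMorphism {A : Type*} (φ : A → List A) : Prop :=
  ∃ w : List A, ∀ a : A, ∃ n : ℕ, φ a = listPow w n

/-- First letter of the image of each letter. -/
def Fst {A : Type*} (φ : A → List A) : A → Option A :=
  fun a => (φ a).head?

/-- Last letter of the image of each letter. -/
def Lst {A : Type*} (φ : A → List A) : A → Option A :=
  fun a => (φ a).getLast?

/-- A morphism is in class P if there is a palindrome `p` which is a prefix of
every `φ(α)` and such that `φ(α) p` is a palindrome for every letter `α`. -/
def IsClassP {A : Type*} (φ : A → List A) : Prop :=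
  ∃ p : List A, p.reverse = p ∧
    ∀ a : A, p <+: φ a ∧ (φ a ++ p).reverse = φ a ++ p

/-- The finite word `v` is a factor of the infinite word `u`. -/
def IsFactor {A : Type*} (u : ℕ → A) (v : List A) : Prop :=
  ∃ i : ℕ, v = (List.range v.length).map fun j => u (i + j)

/-- An infinite word is uniformly recurrent if every factor occurs in every
sufficiently long factor. -/
def UnifRecurrent {A : Type*} (u : ℕ → A) : Prop :=
  ∀ v : List A, IsFactor u v → ∃ n : ℕ,
    ∀ f : List A, IsFactor u f → f.length = n → v <:+: f

/-- An infinite word is eventually periodic. -/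
def EventuallyPeriodic {A : Type*} (u : ℕ → A) : Prop :=
  ∃ p : ℕ, 0 < p ∧ ∃ N : ℕ, ∀ n : ℕ, N ≤ n → u (n + p) = u n

/-- A factor `v` is right special in `u`. -/
def RightSpecial {A : Type*} (u : ℕ → A) (v : List A) : Prop :=
  ∃ x y : A, x ≠ y ∧ IsFactor u (v ++ [x]) ∧ IsFactor u (v ++ [y])

/-- A factor `v` is left special in `u`. -/
def LeftSpecial {A : Type*} (u : ℕ → A) (v : List A) : Prop :=
  ∃ x y : A, x ≠ y ∧ IsFactor u (x :: v) ∧ IsFactor u (y :: v)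

section

variable {A : Type*}

theorem listPow_length (l : List A) (n : ℕ) : (listPow l n).length = n * l.length := by
  induction n with
  | zero => simp [listPow]
  | succ n ih => simp [listPow, ih, Nat.succ_mul, Nat.add_comm]

theorem exists_decomp_of_append_eq_append {x y w : List A} (hx : x ≠ []) (h : x ++ w = w ++ y) :
    ∃ u v i, x = u ++ v ∧ w = listPow (u ++ v) i ++ u ∧ y = v ++ u ∧ u.length < x.length := by
  rcases lt_or_ge w.length x.length with hlt | hle
  · obtain ⟨v, rfl⟩ : w <+: x :=
      List.prefix_of_prefix_length_le (h ▸ List.prefix_append w y) (List.prefix_append x w) hlt.le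
    exact ⟨w, v, 0, rfl, by simp [listPow], by simpa using h.symm, hlt⟩
  · obtain ⟨w', rfl⟩ : x <+: w :=
      List.prefix_of_prefix_length_le (h ▸ List.prefix_append x w) (List.prefix_append w y) hle
    have h' : x ++ w' = w' ++ y := by simpa using h
    obtain ⟨u, v, i, rfl, hw', rfl, hu⟩ := exists_decomp_of_append_eq_append hx h'
    exact ⟨u, v, i + 1, rfl, by simp [listPow, hw'], rfl, hu⟩
termination_by w.length
decreasing_by subst_vars; simpa using List.length_pos_iff.mpr hx

theorem eq_div_and_drop_of_eq_listPow_append {x u v w : List A} {i : ℕ} (hx : x = u ++ v)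
    (hw : w = listPow (u ++ v) i ++ u) (hu : u.length < x.length) :
    i = w.length / x.length ∧ u = w.drop (i * x.length) ∧ v = x.drop u.length := by
  subst hx
  have hlen : u.length + (u ++ v).length * i = w.length := by
    subst hw; simp only [List.length_append, listPow_length]; ring
  refine ⟨((Nat.div_mod_unique (hu.trans_le' (Nat.zero_le _))).mpr ⟨hlen, hu⟩).1.symm, ?_, ?_⟩
  · rw [hw, ← listPow_length, List.drop_left]
  · rw [List.drop_left]

end

/-- If z = xw = wy then there exist unique words u, v and a unique integer i ≥ 0
such that x = uv, w = (uv)^i u and y = vu (with the remainder condition |u| < |x|). -/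
theorem stmt0 {A : Type*} (x y w z : List A) (hx : x ≠ [])
    (h1 : z = x ++ w) (h2 : z = w ++ y) :
    ∃! t : List A × List A × ℕ,
      x = t.1 ++ t.2.1 ∧
      w = listPow (t.1 ++ t.2.1) t.2.2 ++ t.1 ∧
      y = t.2.1 ++ t.1 ∧
      t.1.length < x.length := by
  obtain ⟨u, v, i, hxuv, hw, hy, hu⟩ := exists_decomp_of_append_eq_append hx (h1 ▸ h2)
  refine ⟨(u, v, i), ⟨hxuv, hw, hy, hu⟩, ?_⟩
  rintro ⟨u', v', i'⟩ ⟨hxuv', hw', -, hu'⟩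
  dsimp only at hxuv' hw' hu'
  obtain ⟨rfl, rfl, rfl⟩ := eq_div_and_drop_of_eq_listPow_append hxuv' hw' hu'
  obtain ⟨hi, hu, hv⟩ := eq_div_and_drop_of_eq_listPow_append hxuv hw hu
  rw [← hi, ← hu, ← hv]
end

section
/- Suppose z = xw = wy for words x, y, w, z, and let u, v, i be the unique data with x = uv, w = (uv)^i u, y = vu. Then the following are equivalent: (i) x is the reversal of y; (ii) u and v are both palindromes; (iii) z is a palindrome; (iv) xwy is a palindrome. Moreover, each of these implies that w is a palindrome. -/
/-!
Every word in sight is a prefix of the periodic word `(uv)^ω` ending in `u`: `w = (uv)^i u`,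
`z = (uv)^(i+1) u` and `xwy = (uv)^(i+2) u`. The reversal of `(uv)^n u` is `ũ (ṽũ)^n`, while
`(uv)^n u = u (vu)^n`; comparing these at lengths `|u|` and `|u| + |v|` shows that for `n ≥ 1`
the word `(uv)^n u` is a palindrome exactly when `u` and `v` are.
-/

section

open List

variable {A : Type*}

theorem listPow_append_comm (l : List A) (n : ℕ) : listPow l n ++ l = l ++ listPow l n := by
  induction n with
  | zero => simp [listPow]
  | succ n ih => simp only [listPow, append_assoc, ih]

theorem listPow_succ' (l : List A) (n : ℕ) : listPow l (n + 1) = listPow l n ++ l :=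
  (listPow_append_comm l n).symm

theorem reverse_listPow (l : List A) (n : ℕ) : (listPow l n).reverse = listPow l.reverse n := by
  induction n with
  | zero => simp [listPow]
  | succ n ih => rw [listPow, reverse_append, ih, listPow_append_comm, listPow]

theorem listPow_append_append_eq (u v : List A) (n : ℕ) :
    listPow (u ++ v) n ++ u = u ++ listPow (v ++ u) n := by
  induction n with
  | zero => simp [listPow]
  | succ n ih => simp only [listPow, append_assoc, ih]

theorem reverse_listPow_append (u v : List A) (n : ℕ) :
    (listPow (u ++ v) n ++ u).reverse = u.reverse ++ listPow (v.reverse ++ u.reverse) n := by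
  rw [reverse_append, reverse_listPow, reverse_append]

theorem append_eq_reverse_append_iff (u v : List A) :
    u ++ v = (v ++ u).reverse ↔ u.reverse = u ∧ v.reverse = v := by
  rw [reverse_append]
  constructor
  · intro h
    exact append_inj h.symm (length_reverse ..)
  · rintro ⟨hu, hv⟩
    rw [hu, hv]

theorem reverse_listPow_append_eq_self {u v : List A} (hu : u.reverse = u) (hv : v.reverse = v)
    (n : ℕ) : (listPow (u ++ v) n ++ u).reverse = listPow (u ++ v) n ++ u := by
  rw [reverse_listPow_append, hu, hv, listPow_append_append_eq]

theorem reverse_listPow_succ_append_eq_self_iff (u v : List A) (n : ℕ) :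
    (listPow (u ++ v) (n + 1) ++ u).reverse = listPow (u ++ v) (n + 1) ++ u ↔
      u.reverse = u ∧ v.reverse = v := by
  refine ⟨fun h => ?_, fun ⟨hu, hv⟩ => reverse_listPow_append_eq_self hu hv _⟩
  rw [reverse_listPow_append, listPow_append_append_eq] at h
  obtain ⟨hu, hpow⟩ := append_inj h (length_reverse ..)
  rw [listPow, listPow, append_assoc, append_assoc] at hpow
  exact ⟨hu, (append_inj hpow (length_reverse ..)).1⟩

end

open List in
theorem stmt3_general {A : Type*} (x y w z u v : List A) (i : ℕ)
    (h1 : z = x ++ w)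
    (hx : x = u ++ v) (hw : w = listPow (u ++ v) i ++ u) (hy : y = v ++ u) :
    List.TFAE [x = y.reverse,
               u.reverse = u ∧ v.reverse = v,
               z.reverse = z,
               (x ++ w ++ y).reverse = x ++ w ++ y] ∧
    (x = y.reverse → w.reverse = w) := by
  subst h1 hx hw hy
  have hz : u ++ v ++ (listPow (u ++ v) i ++ u) = listPow (u ++ v) (i + 1) ++ u := by
    simp only [listPow, append_assoc]
  have hxwy : listPow (u ++ v) (i + 1) ++ u ++ (v ++ u) = listPow (u ++ v) (i + 2) ++ u := by
    simp only [listPow_succ' _ (i + 1), append_assoc]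
  rw [hz, hxwy]
  have h12 := append_eq_reverse_append_iff u v
  refine ⟨?_, fun h => reverse_listPow_append_eq_self (h12.1 h).1 (h12.1 h).2 i⟩
  tfae_have 1 ↔ 2 := h12
  tfae_have 3 ↔ 2 := reverse_listPow_succ_append_eq_self_iff u v i
  tfae_have 4 ↔ 2 := reverse_listPow_succ_append_eq_self_iff u v (i + 1)
  tfae_finish

/-- Let z = xw = wy, with x = uv, w = (uv)^i u, y = vu. Then the conditions
(i) x = ỹ, (ii) u and v are palindromes, (iii) z is a palindrome,
(iv) xwy is a palindrome, are all equivalent, and each implies that w is a palindrome. -/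
theorem stmt3 {A : Type*} (x y w z u v : List A) (i : ℕ)
    (h1 : z = x ++ w) (h2 : z = w ++ y)
    (hx : x = u ++ v) (hw : w = listPow (u ++ v) i ++ u) (hy : y = v ++ u) :
    List.TFAE [x = y.reverse,
               u.reverse = u ∧ v.reverse = v,
               z.reverse = z,
               (x ++ w ++ y).reverse = x ++ w ++ y] ∧
    (x = y.reverse → w.reverse = w) :=
  stmt3_general x y w z u v i h1 hx hw hy
end

section
/- If u is an eventually periodic infinite word whose language is closed under reversal, then u is purely periodic and u = (pq)^ω for some palindromes p and q. -/
section Factors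

variable {A : Type*} (u : ℕ → A)

def factorAt (i L : ℕ) : List A := (List.range L).map fun j => u (i + j)

@[simp]
lemma length_factorAt (i L : ℕ) : (factorAt u i L).length = L := by
  simp [factorAt]

@[simp]
lemma getElem_factorAt (i L k : ℕ) (hk : k < (factorAt u i L).length) :
    (factorAt u i L)[k] = u (i + k) := by
  simp [factorAt]

lemma factorAt_append (i a b : ℕ) :
    factorAt u i a ++ factorAt u (i + a) b = factorAt u i (a + b) := by
  simp [factorAt, List.range_add, add_assoc, Function.comp_def]

lemma reverse_factorAt_eq_factorAt_iff (i j L : ℕ) :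
    (factorAt u i L).reverse = factorAt u j L ↔ ∀ k < L, u (j + k) = u (i + (L - 1 - k)) := by
  constructor
  · intro h k hk
    have := congrArg (·[k]?) h
    simpa [List.getElem?_reverse, hk, eq_comm] using this
  · intro h
    refine List.ext_getElem (by simp) fun k h₁ h₂ => ?_
    simp only [List.getElem_reverse, getElem_factorAt, length_factorAt]
    simp only [length_factorAt] at h₂
    exact (h k h₂).symm

def ClosedUnderReversal : Prop := ∀ v : List A, IsFactor u v → IsFactor u v.reverse

end Factors

namespace ClosedUnderReversal

variable {A : Type*} {u : ℕ → A}

lemma exists_reflected_occurrence (hu : ClosedUnderReversal u) (i L : ℕ) :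
    ∃ j, ∀ k < L, u (j + k) = u (i + (L - 1 - k)) := by
  obtain ⟨j, hj⟩ := hu (factorAt u i L) ⟨i, by simp [factorAt]⟩
  rw [List.length_reverse, length_factorAt] at hj
  exact ⟨j, (reverse_factorAt_eq_factorAt_iff u i j L).1 hj⟩

/-- Reflecting inside the prefix of length `M + i + L` puts the reflected copy beyond `M`. -/
lemma exists_reflected_occurrence_ge (hu : ClosedUnderReversal u) (i L M : ℕ) :
    ∃ j ≥ M, ∀ k < L, u (j + k) = u (i + (L - 1 - k)) := by
  obtain ⟨j, hj⟩ := hu.exists_reflected_occurrence 0 (M + i + L)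
  refine ⟨j + M, by omega, fun k hk => ?_⟩
  rw [add_assoc, hj (M + k) (by omega)]
  congr 1
  omega

lemma exists_occurrence_ge (hu : ClosedUnderReversal u) (i L M : ℕ) :
    ∃ j ≥ M, ∀ k < L, u (j + k) = u (i + k) := by
  obtain ⟨i', hi'⟩ := hu.exists_reflected_occurrence i L
  obtain ⟨j, hjM, hj⟩ := hu.exists_reflected_occurrence_ge i' L M
  refine ⟨j, hjM, fun k hk => ?_⟩
  rw [hj k hk, hi' _ (by omega)]
  congr 1
  omega

lemma periodic_of_eventually (hu : ClosedUnderReversal u) {p N : ℕ}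
    (hN : ∀ n, N ≤ n → u (n + p) = u n) :
    Function.Periodic u p := by
  obtain ⟨m, hmN, hm⟩ := hu.exists_occurrence_ge 0 (N + p) N
  intro n
  rcases le_or_gt N n with hn | hn
  · exact hN n hn
  · calc u (n + p) = u (m + n + p) := by rw [add_assoc, hm _ (by omega), zero_add]
      _ = u (m + n) := hN _ (by omega)
      _ = u n := by rw [hm _ (by omega), zero_add]

/-- `r` is the residue mod `p` of a position where the reversed period word occurs. -/
lemma exists_palindromic_split (hu : ClosedUnderReversal u) {p : ℕ}
    (hper : Function.Periodic u p) (hp : 0 < p) :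
    ∃ r ≤ p, (factorAt u 0 r).reverse = factorAt u 0 r ∧
      (factorAt u r (p - r)).reverse = factorAt u r (p - r) := by
  obtain ⟨i, hi⟩ := hu.exists_reflected_occurrence 0 p
  have hrot : ∀ k < p, u (i % p + k) = u (p - 1 - k) := fun k hk => by
    rw [← hper.map_mod_nat, Nat.mod_add_mod, hper.map_mod_nat, hi k hk, zero_add]
  have hr := Nat.mod_lt i hp
  refine ⟨i % p, hr.le, ?_, ?_⟩
  · rw [reverse_factorAt_eq_factorAt_iff]
    intro k hk
    rw [zero_add, zero_add, ← hper k, show k + p = i % p + (p - i % p + k) by omega,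
      hrot _ (by omega)]
    congr 1
    omega
  · rw [reverse_factorAt_eq_factorAt_iff]
    intro k hk
    rw [hrot _ (by omega)]
    congr 1
    omega

end ClosedUnderReversal

/-- An eventually periodic word with language closed under reversal is purely
periodic of the form (pq)^ω with p, q palindromes. -/
theorem stmt17 {A : Type*} (u : ℕ → A)
    (hep : EventuallyPeriodic u)
    (hcur : ∀ v : List A, IsFactor u v → IsFactor u v.reverse) :
    ∃ p q : List A, p.reverse = p ∧ q.reverse = q ∧ p ++ q ≠ [] ∧
      ∀ n : ℕ, ∃ h : n % (p ++ q).length < (p ++ q).length,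
        u n = (p ++ q)[n % (p ++ q).length]'h := by
  have hu : ClosedUnderReversal u := hcur
  obtain ⟨p, hp, N, hN⟩ := hep
  have hper := hu.periodic_of_eventually hN
  obtain ⟨r, hrp, ht, hs⟩ := hu.exists_palindromic_split hper hp
  have hword : factorAt u 0 r ++ factorAt u r (p - r) = factorAt u 0 p := by
    simpa [Nat.add_sub_cancel' hrp] using factorAt_append u 0 r (p - r)
  refine ⟨_, _, ht, hs, ?_, fun n => ?_⟩ <;> rw [hword]
  · exact List.ne_nil_of_length_pos (by simpa using hp)
  · refine ⟨by simpa using Nat.mod_lt n hp, ?_⟩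
    simp [hper.map_mod_nat]
end
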